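/- arXiv:1812.04474 — 5 statements merged into one kernel-verified Lean document; each statement's English description precedes it below -/
import Mathlib

section
/- For any x₁, x₂ ∈ D, |V(x₁) − V(x₂)| ≤ M₁·|x₁ − x₂|. (Note that D need not be convex; the segment from x₁ to x₂ may leave D.) -/
open Set

/-!
Order the two points so that `V x ≤ V y`. The segment from `x` to `y` may leave `D`, but by the
intermediate value theorem it contains a subsegment, running from the last visit of the level
`V x` before the first visit of the level `V y`, on which `V` stays between `V x` and `V y`, hence
in `D`. The mean value theorem on this subsegment, which is no longer than `‖y - x‖`, gives the
bound.
-/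

section HittingTimes

variable {α δ : Type*} [ConditionallyCompleteLinearOrder α] [TopologicalSpace α] [OrderTopology α]
  [DenselyOrdered α] [LinearOrder δ] [TopologicalSpace δ] [OrderClosedTopology δ]
  {a b : α} {g : α → δ}

theorem ContinuousOn.exists_eq_right_forall_le (hab : a ≤ b) (hg : ContinuousOn g (Icc a b))
    (hgab : g a ≤ g b) : ∃ t ∈ Icc a b, g t = g b ∧ ∀ u ∈ Icc a t, g u ≤ g b := by
  have hT : IsCompact (Icc a b ∩ g ⁻¹' {g b}) :=
    isCompact_Icc.of_isClosed_subset (hg.preimage_isClosed_of_isClosed isClosed_Icc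
      isClosed_singleton) inter_subset_left
  obtain ⟨t, ⟨htab, htb⟩, ht_least⟩ := hT.exists_isLeast ⟨b, right_mem_Icc.2 hab, rfl⟩
  refine ⟨t, htab, htb, fun u hu => not_lt.1 fun hbu => ?_⟩
  obtain ⟨v, hv, hvb⟩ := intermediate_value_Icc hu.1 (hg.mono (Icc_subset_Icc_right
    (hu.2.trans htab.2))) ⟨hgab, hbu.le⟩
  have htv : t ≤ v := ht_least ⟨⟨hv.1, hv.2.trans (hu.2.trans htab.2)⟩, hvb⟩
  have hut : u = t := le_antisymm hu.2 (htv.trans hv.2)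
  exact hbu.ne' (hut ▸ htb)

theorem ContinuousOn.exists_eq_left_forall_ge (hab : a ≤ b) (hg : ContinuousOn g (Icc a b))
    (hgab : g a ≤ g b) : ∃ s ∈ Icc a b, g s = g a ∧ ∀ u ∈ Icc s b, g a ≤ g u := by
  obtain ⟨s, hs, hgs, hg_ge⟩ := ContinuousOn.exists_eq_right_forall_le
    (a := OrderDual.toDual b) (b := OrderDual.toDual a)
    (g := OrderDual.toDual ∘ g ∘ OrderDual.ofDual) hab (by rw [Icc_toDual]; exact hg) hgab
  exact ⟨s, ⟨hs.2, hs.1⟩, hgs, fun u hu => hg_ge u ⟨hu.2, hu.1⟩⟩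

theorem ContinuousOn.exists_subinterval_mapsTo_Icc (hab : a ≤ b)
    (hg : ContinuousOn g (Icc a b)) (hgab : g a ≤ g b) :
    ∃ s t, a ≤ s ∧ s ≤ t ∧ t ≤ b ∧ g s = g a ∧ g t = g b ∧
      MapsTo g (Icc s t) (Icc (g a) (g b)) := by
  obtain ⟨t, hat, htb, hg_le⟩ := hg.exists_eq_right_forall_le hab hgab
  obtain ⟨s, hst, hsa, hle_g⟩ :=
    (hg.mono (Icc_subset_Icc_right hat.2)).exists_eq_left_forall_ge hat.1 (htb ▸ hgab)
  exact ⟨s, t, hst.1, hst.2, hat.2, hsa, htb, fun u hu =>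
    ⟨hle_g u hu, hg_le u ⟨hst.1.trans hu.1, hu.2⟩⟩⟩

end HittingTimes

section MeanValue

variable {E : Type*} [NormedAddCommGroup E] [NormedSpace ℝ E]

theorem sub_le_mul_norm_of_norm_fderiv_le {f : E → ℝ} {x y : E} {C : ℝ}
    (hf : Differentiable ℝ f) (hxy : f x ≤ f y)
    (hC : ∀ z, f z ∈ Icc (f x) (f y) → ‖fderiv ℝ f z‖ ≤ C) :
    f y - f x ≤ C * ‖y - x‖ := by
  set g : ℝ → ℝ := f ∘ AffineMap.lineMap x y
  have hg_deriv (u : ℝ) : HasDerivAt g (fderiv ℝ f (AffineMap.lineMap x y u) (y - x)) u :=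
    (hf _).hasFDerivAt.comp_hasDerivAt u AffineMap.hasDerivAt_lineMap
  have hg_cont : Continuous g := hf.continuous.comp AffineMap.lineMap_continuous
  have hg0 : g 0 = f x := by simp [g]
  have hg1 : g 1 = f y := by simp [g]
  obtain ⟨s, t, hs, hst, ht, hgs, hgt, hg_mapsTo⟩ :=
    hg_cont.continuousOn.exists_subinterval_mapsTo_Icc zero_le_one (hg0 ▸ hg1 ▸ hxy)
  have hC_nonneg : 0 ≤ C := (norm_nonneg _).trans (hC x ⟨le_rfl, hxy⟩)
  have hg_deriv_le : ∀ u ∈ interior (Icc s t), deriv g u ≤ C * ‖y - x‖ := by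
    intro u hu
    rw [(hg_deriv u).deriv]
    have hu' : g u ∈ Icc (f x) (f y) := hg0 ▸ hg1 ▸ hg_mapsTo (interior_subset hu)
    exact (le_abs_self _).trans ((fderiv ℝ f _).le_opNorm _ |>.trans
      (mul_le_mul_of_nonneg_right (hC _ hu') (norm_nonneg _)))
  have hmvt := (convex_Icc s t).image_sub_le_mul_sub_of_deriv_le hg_cont.continuousOn
    (fun u _ => (hg_deriv u).differentiableAt.differentiableWithinAt) hg_deriv_le
    s (left_mem_Icc.2 hst) t (right_mem_Icc.2 hst) hst
  calc f y - f x = g t - g s := by rw [hgt, hgs, hg0, hg1]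
    _ ≤ C * ‖y - x‖ * (t - s) := hmvt
    _ ≤ C * ‖y - x‖ * 1 := by gcongr; linarith
    _ = C * ‖y - x‖ := mul_one _

theorem abs_sub_le_mul_norm_of_norm_fderiv_le {f : E → ℝ} {x y : E} {C : ℝ}
    (hf : Differentiable ℝ f) (hC : ∀ z, f z ∈ uIcc (f x) (f y) → ‖fderiv ℝ f z‖ ≤ C) :
    |f x - f y| ≤ C * ‖x - y‖ := by
  rcases le_total (f x) (f y) with hxy | hyx
  · rw [abs_sub_comm, abs_of_nonneg (sub_nonneg.2 hxy), norm_sub_rev]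
    exact sub_le_mul_norm_of_norm_fderiv_le hf hxy fun z hz => hC z (uIcc_of_le hxy ▸ hz)
  · rw [abs_of_nonneg (sub_nonneg.2 hyx)]
    exact sub_le_mul_norm_of_norm_fderiv_le hf hyx fun z hz => hC z (uIcc_of_ge hyx ▸ hz)

end MeanValue

theorem stmt_2_general {n : ℕ}
    (V : EuclideanSpace ℝ (Fin n) → ℝ) (c₁ c₂ M₁ : ℝ)
    (hV_C1 : ContDiff ℝ 1 V)
    (hM₁ : IsGreatest ((fun y => ‖gradient V y‖) ''
      {y : EuclideanSpace ℝ (Fin n) | c₁ ≤ V y ∧ V y ≤ c₂}) M₁) :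
    ∀ x₁ ∈ {y : EuclideanSpace ℝ (Fin n) | c₁ ≤ V y ∧ V y ≤ c₂},
    ∀ x₂ ∈ {y : EuclideanSpace ℝ (Fin n) | c₁ ≤ V y ∧ V y ≤ c₂},
      |V x₁ - V x₂| ≤ M₁ * ‖x₁ - x₂‖ := by
  intro x₁ hx₁ x₂ hx₂
  refine abs_sub_le_mul_norm_of_norm_fderiv_le (hV_C1.differentiable one_ne_zero) fun z hz => ?_
  have hz_mem : c₁ ≤ V z ∧ V z ≤ c₂ := uIcc_subset_Icc hx₁ hx₂ hz
  have h_norm : ‖gradient V z‖ = ‖fderiv ℝ V z‖ := (InnerProductSpace.toDual ℝ _).symm.norm_map _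
  exact h_norm ▸ hM₁.2 ⟨z, hz_mem, rfl⟩

/-- Lemma 1 (Lemma `lem:0`): For any `x₁, x₂ ∈ D`, `|V x₁ - V x₂| ≤ M₁ * ‖x₁ - x₂‖`,
where `M₁ = max_{x ∈ D} ‖∇V x‖` and `D = {x | c₁ ≤ V x ≤ c₂}` is compact
(but not necessarily convex). -/
theorem stmt_2 {n : ℕ}
    (V : EuclideanSpace ℝ (Fin n) → ℝ) (c₁ c₂ M₁ : ℝ)
    (hV_nonneg : ∀ y, 0 ≤ V y) (hV0 : V 0 = 0) (hV_pos : ∀ y, y ≠ 0 → 0 < V y)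
    (hV_C1 : ContDiff ℝ 1 V)
    (hc₁ : 0 < c₁) (hc₁c₂ : c₁ < c₂)
    (hD_compact : IsCompact {y : EuclideanSpace ℝ (Fin n) | c₁ ≤ V y ∧ V y ≤ c₂})
    (hM₁ : IsGreatest ((fun y => ‖gradient V y‖) ''
      {y : EuclideanSpace ℝ (Fin n) | c₁ ≤ V y ∧ V y ≤ c₂}) M₁) :
    ∀ x₁ ∈ {y : EuclideanSpace ℝ (Fin n) | c₁ ≤ V y ∧ V y ≤ c₂},
    ∀ x₂ ∈ {y : EuclideanSpace ℝ (Fin n) | c₁ ≤ V y ∧ V y ≤ c₂},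
      |V x₁ - V x₂| ≤ M₁ * ‖x₁ - x₂‖ :=
  stmt_2_general V c₁ c₂ M₁ hV_C1 hM₁
end

section
/- Let η ∈ [0,1] and define γ_η := (1−η)·a·c₁ / (α + η·a·M₁). If x ∈ D satisfies V̇(x) ≥ −η·a·V(x), then every y ∈ D with |y − x| ≤ γ_η satisfies V̇(y) ≥ −a·V(y); that is, the intersection of the closed ball of radius γ_η centered at x with D is contained in Ω₁ := {y ∈ D : V̇(y) ≥ −a·V(y)}. -/
open Set MeasureTheory Metric
open scoped RealInnerProductSpace

/-- Lemma 3 (Lemma `lem:2`): with `γ_η = (1-η) a c₁ / (α + η a M₁)`, if `x ∈ D`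
satisfies `V̇ x ≥ -η a V x`, then every `y ∈ D` with `‖y - x‖ ≤ γ_η` satisfies
`V̇ y ≥ -a V y`; i.e. `closedBall x γ_η ∩ D ⊆ Ω₁ = {y ∈ D | V̇ y ≥ -a V y}`. -/
theorem stmt_4 {n : ℕ}
    (f : EuclideanSpace ℝ (Fin n) → EuclideanSpace ℝ (Fin n))
    (V : EuclideanSpace ℝ (Fin n) → ℝ)
    (c₁ c₂ a M₁ α η : ℝ)
    (hV_nonneg : ∀ y, 0 ≤ V y)
    (hV_C1 : ContDiff ℝ 1 V)
    (hc₁ : 0 < c₁) (hc₁c₂ : c₁ < c₂)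
    (ha : 0 < a) (hM₁ : 0 < M₁) (hα : 0 < α)
    (hη : η ∈ Set.Icc (0:ℝ) 1)
    (hVLip : ∀ x₁ ∈ {y : EuclideanSpace ℝ (Fin n) | c₁ ≤ V y ∧ V y ≤ c₂},
             ∀ x₂ ∈ {y : EuclideanSpace ℝ (Fin n) | c₁ ≤ V y ∧ V y ≤ c₂},
             |V x₁ - V x₂| ≤ M₁ * ‖x₁ - x₂‖)
    (hVdotLip : ∀ x₁ ∈ {y : EuclideanSpace ℝ (Fin n) | c₁ ≤ V y ∧ V y ≤ c₂},
                ∀ x₂ ∈ {y : EuclideanSpace ℝ (Fin n) | c₁ ≤ V y ∧ V y ≤ c₂},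
                |⟪gradient V x₁, f x₁⟫ - ⟪gradient V x₂, f x₂⟫| ≤ α * ‖x₁ - x₂‖)
    (x : EuclideanSpace ℝ (Fin n))
    (hxD : x ∈ {y : EuclideanSpace ℝ (Fin n) | c₁ ≤ V y ∧ V y ≤ c₂})
    (hx : ⟪gradient V x, f x⟫ ≥ -η * a * V x) :
    ∀ y ∈ {y : EuclideanSpace ℝ (Fin n) | c₁ ≤ V y ∧ V y ≤ c₂},
      ‖y - x‖ ≤ (1 - η) * a * c₁ / (α + η * a * M₁) →
      ⟪gradient V y, f y⟫ ≥ -a * V y := by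
  intro y hyD hyr
  have hη1 := hη.1
  have hη2 := hη.2
  have h1 := hVdotLip y hyD x hxD
  have h2 := hVLip x hxD y hyD
  have hden : 0 < α + η * a * M₁ := by positivity
  have hr : ‖y - x‖ * (α + η * a * M₁) ≤ (1 - η) * a * c₁ := by
    rw [le_div_iff₀ hden] at hyr; exact hyr
  have hb1 := abs_le.mp h1
  have hb2 := abs_le.mp h2
  have hn : ‖x - y‖ = ‖y - x‖ := norm_sub_rev x y
  rw [hn] at hb2
  have hcy : c₁ ≤ V y := hyD.1
  have hηa : (0:ℝ) ≤ η * a := by positivity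
  have h1ηa : (0:ℝ) ≤ (1 - η) * a := by nlinarith
  have p1 := mul_le_mul_of_nonneg_left hb2.2 hηa
  have p2 := mul_le_mul_of_nonneg_left hcy h1ηa
  nlinarith [hb1.1, hr, p1, p2]
end

section
/- Let x(·) be a solution of ẋ = f(x) where f is C¹ with |f(y)| ≥ L₀ > 0 and Lipschitz constant L₁ along the solution. If 0 < γ < L₀/L₁ and the arc length satisfies ∫ₛᵗ|f(x(τ))|dτ < (2L₀/L₁)·(π − arcsin(L₁γ/L₀)), then the tube of radius γ around x(·) is non-self-overlapping over (s,t), i.e. N_γ(x(τ₁)) ∩ N_γ(x(τ₂)) = ∅ for all distinct τ₁, τ₂ ∈ (s,t). -/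
open Set Metric intervalIntegral
open scoped RealInnerProductSpace

/-- The normal disk of radius `γ` to the vector field `f` at the point `p`. -/
def normalDisk {n : ℕ} (f : EuclideanSpace ℝ (Fin n) → EuclideanSpace ℝ (Fin n))
    (γ : ℝ) (p : EuclideanSpace ℝ (Fin n)) : Set (EuclideanSpace ℝ (Fin n)) :=
  {y | ‖y - p‖ ≤ γ ∧ ⟪y - p, f p⟫ = 0}

/-!
The unit tangent `u = f(x) / ‖f(x)‖` of the solution satisfies `‖u'‖ ≤ ‖Df‖ ≤ L₁`; comparing
`arccos ⟪u τ, u a⟫` with a function of slope `L₁` shows that the tangent turns by at most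
`κ = L₁ / L₀` per unit of arc length.

Suppose `y` lies in the normal disks at `x τ₁` and `x τ₂`, let `ℓ` be the arc length between them,
and project onto the tangent at the arc-length midpoint. Every tangent of the arc is within the
angle `Θ = κℓ/2 < π` of it, so the chord `x τ₂ - x τ₁` has projection at least `(2/κ) sin Θ`.
On the other hand `y - x τᵢ` is orthogonal to the tangent at `τᵢ`, which is within an angle
`θᵢ ≤ Θ` of the midpoint tangent, so its projection is at most `γ sin θᵢ`. Hence
`sin Θ ≤ κγ max(sin θ₁, sin θ₂)`, which is impossible: for `Θ ≤ π/2` because `κγ < 1`, and for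
`Θ > π/2` because then `sin Θ > sin (π - arcsin (κγ)) = κγ`.
-/

open Real InnerProductGeometry Filter Topology MeasureTheory

section

variable {E : Type*} [NormedAddCommGroup E] [InnerProductSpace ℝ E]

theorem norm_sub_inner_smul_le {u : E} (hu : ‖u‖ = 1) (w : E) : ‖w - ⟪u, w⟫ • u‖ ≤ ‖w‖ := by
  have hsq : ‖w - ⟪u, w⟫ • u‖ ^ 2 = ‖w‖ ^ 2 - ⟪u, w⟫ ^ 2 := by
    rw [norm_sub_sq_real, norm_smul, real_inner_smul_right, hu, real_inner_comm, Real.norm_eq_abs,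
      mul_one, sq_abs]
    ring
  exact (pow_le_pow_iff_left₀ (norm_nonneg _) (norm_nonneg _) two_ne_zero).1
    (by rw [hsq]; linarith [sq_nonneg ⟪u, w⟫])

theorem abs_inner_le_norm_mul_norm_mul_sin_angle {u v w : E} (h : ⟪v, u⟫ = 0) :
    |⟪v, w⟫| ≤ ‖v‖ * ‖w‖ * sin (angle u w) := by
  rcases eq_or_ne u 0 with rfl | hu
  · simpa using abs_real_inner_le_norm v w
  have hu₀ : 0 < ‖u‖ := norm_pos_iff.2 hu
  set w' := w - (⟪u, w⟫ / ‖u‖ ^ 2) • u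
  have hvw : ⟪v, w⟫ = ⟪v, w'⟫ := by simp [w', inner_sub_right, real_inner_smul_right, h]
  have hw' : ‖w'‖ * ‖u‖ = sin (angle u w) * (‖u‖ * ‖w‖) := by
    rw [sin_angle_mul_norm_mul_norm, ← Real.sqrt_sq (by positivity : 0 ≤ ‖w'‖ * ‖u‖)]
    congr 1
    simp only [w', mul_pow, norm_sub_sq_real, norm_smul, real_inner_smul_right,
      real_inner_self_eq_norm_sq, Real.norm_eq_abs, mul_pow, sq_abs, real_inner_comm u w]
    field_simp
    ring
  have hw'_eq : ‖w'‖ = ‖w‖ * sin (angle u w) := by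
    rw [← mul_right_cancel_iff_of_pos hu₀, hw']
    ring
  calc |⟪v, w⟫| = |⟪v, w'⟫| := by rw [hvw]
    _ ≤ ‖v‖ * ‖w'‖ := abs_real_inner_le_norm _ _
    _ = ‖v‖ * ‖w‖ * sin (angle u w) := by rw [hw'_eq, mul_assoc]

theorem HasDerivWithinAt.normalize {v : ℝ → E} {v' : E} {s : Set ℝ} {τ : ℝ}
    (hv : HasDerivWithinAt v v' s τ) (h0 : v τ ≠ 0) :
    HasDerivWithinAt (fun t ↦ NormedSpace.normalize (v t))
      (‖v τ‖⁻¹ • (v' - ⟪NormedSpace.normalize (v τ), v'⟫ • NormedSpace.normalize (v τ))) s τ := by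
  have hn : 0 < ‖v τ‖ := norm_pos_iff.2 h0
  have hnorm : HasDerivWithinAt (fun t ↦ ‖v t‖) (⟪v τ, v'⟫ / ‖v τ‖) s τ := by
    have := hv.norm_sq.sqrt (by positivity)
    simp only [Real.sqrt_sq (norm_nonneg _)] at this
    convert this using 1
    field_simp
  convert (hnorm.inv hn.ne').smul hv using 1
  · rfl
  · simp only [NormedSpace.normalize, real_inner_smul_left, smul_sub, smul_smul]
    rw [sub_eq_add_neg, ← neg_smul]
    congr 2
    field_simp

theorem arccos_le_arccos_add_mul_of_abs_deriv_le {p p' : ℝ → ℝ} {a b L : ℝ} (hab : a ≤ b)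
    (hL : 0 ≤ L) (hp : ∀ τ ∈ Icc a b, HasDerivWithinAt p (p' τ) (Icc a b) τ)
    (hp₁ : ∀ τ ∈ Icc a b, |p τ| ≤ 1) (hp' : ∀ τ ∈ Icc a b, |p' τ| ≤ L * √(1 - p τ ^ 2)) :
    arccos (p b) ≤ arccos (p a) + L * (b - a) := by
  -- `arccos` is not differentiable at `±1`: run the mean value argument for `c * p` with `c < 1`,
  -- then let `c → 1`.
  have hshrunk : ∀ c ∈ Ioo (0 : ℝ) 1, arccos (c * p b) ≤ arccos (c * p a) + L * (b - a) := by
    rintro c ⟨hc₀, hc₁⟩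
    have hcp : ∀ τ ∈ Icc a b, (c * p τ) ^ 2 < 1 := fun τ hτ ↦ by
      rw [sq_lt_one_iff_abs_lt_one, abs_mul, abs_of_pos hc₀]
      nlinarith [hp₁ τ hτ, abs_nonneg (p τ)]
    have hderiv : ∀ τ ∈ Icc a b, HasDerivWithinAt (fun t ↦ arccos (c * p t))
        (-(1 / √(1 - (c * p τ) ^ 2)) * (c * p' τ)) (Icc a b) τ := fun τ hτ ↦ by
      have h := abs_lt.1 ((sq_lt_one_iff_abs_lt_one _).1 (hcp τ hτ))
      exact (hasDerivAt_arccos h.1.ne' h.2.ne).comp_hasDerivWithinAt (h₂ := arccos) τ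
        ((hp τ hτ).const_mul c)
    have hbound : ∀ τ ∈ Icc a b, ‖-(1 / √(1 - (c * p τ) ^ 2)) * (c * p' τ)‖ ≤ L := by
      intro τ hτ
      have hD : 0 < √(1 - (c * p τ) ^ 2) := Real.sqrt_pos.2 (by linarith [hcp τ hτ])
      have hsq : √(c ^ 2 * (1 - p τ ^ 2)) ≤ √(1 - (c * p τ) ^ 2) :=
        Real.sqrt_le_sqrt (by nlinarith [sq_nonneg (p τ)])
      rw [Real.sqrt_mul (sq_nonneg c), Real.sqrt_sq hc₀.le] at hsq
      rw [norm_mul, norm_neg, norm_div, norm_one, Real.norm_of_nonneg hD.le, norm_mul,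
        Real.norm_of_nonneg hc₀.le, Real.norm_eq_abs, one_div_mul_eq_div, div_le_iff₀ hD]
      calc c * |p' τ| ≤ c * (L * √(1 - p τ ^ 2)) := mul_le_mul_of_nonneg_left (hp' τ hτ) hc₀.le
        _ = L * (c * √(1 - p τ ^ 2)) := by ring
        _ ≤ L * √(1 - (c * p τ) ^ 2) := mul_le_mul_of_nonneg_left hsq hL
    have h := (convex_Icc a b).norm_image_sub_le_of_norm_hasDerivWithin_le hderiv hbound
      ⟨le_rfl, hab⟩ ⟨hab, le_rfl⟩
    rw [Real.norm_eq_abs, Real.norm_eq_abs, abs_of_nonneg (sub_nonneg.2 hab)] at h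
    linarith [le_abs_self (arccos (c * p b) - arccos (c * p a))]
  have hlim : ∀ q : ℝ, Tendsto (fun c : ℝ ↦ arccos (c * q)) (𝓝[<] 1) (𝓝 (arccos q)) := fun q ↦ by
    have hcont : Continuous fun c : ℝ ↦ arccos (c * q) :=
      continuous_arccos.comp (continuous_id.mul continuous_const)
    exact (hcont.tendsto' 1 _ (by simp)).mono_left nhdsWithin_le_nhds
  exact le_of_tendsto_of_tendsto (hlim _) ((hlim _).add_const _)
    (eventually_of_mem (Ioo_mem_nhdsLT one_pos) hshrunk)

theorem angle_le_mul_of_norm_deriv_le_mul_norm {v v' : ℝ → E} {a b L : ℝ} (hab : a ≤ b)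
    (hv : ∀ τ ∈ Icc a b, HasDerivWithinAt v (v' τ) (Icc a b) τ)
    (hv₀ : ∀ τ ∈ Icc a b, v τ ≠ 0) (hv' : ∀ τ ∈ Icc a b, ‖v' τ‖ ≤ L * ‖v τ‖) :
    angle (v a) (v b) ≤ L * (b - a) := by
  set u : ℝ → E := fun t ↦ NormedSpace.normalize (v t)
  set u' : ℝ → E := fun τ ↦ ‖v τ‖⁻¹ • (v' τ - ⟪u τ, v' τ⟫ • u τ)
  have ha : a ∈ Icc a b := ⟨le_rfl, hab⟩
  have hu₁ : ∀ τ ∈ Icc a b, ‖u τ‖ = 1 := fun τ hτ ↦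
    NormedSpace.norm_normalize_eq_one_iff.2 (hv₀ τ hτ)
  have hu' : ∀ τ ∈ Icc a b, ‖u' τ‖ ≤ L := fun τ hτ ↦ by
    have hn : 0 < ‖v τ‖ := norm_pos_iff.2 (hv₀ τ hτ)
    rw [norm_smul, norm_inv, norm_norm, inv_mul_le_iff₀ hn, mul_comm]
    exact (norm_sub_inner_smul_le (hu₁ τ hτ) _).trans (hv' τ hτ)
  have horth : ∀ τ ∈ Icc a b, ⟪u' τ, u τ⟫ = 0 := fun τ hτ ↦ by
    simp only [u', real_inner_smul_left, inner_sub_left, real_inner_self_eq_norm_sq, hu₁ τ hτ,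
      real_inner_comm (u τ) (v' τ)]
    ring
  have hangle : ∀ τ ∈ Icc a b, angle (u τ) (u a) = arccos ⟪u τ, u a⟫ := fun τ hτ ↦ by
    simp [InnerProductGeometry.angle, hu₁ τ hτ, hu₁ a ha]
  have hL : 0 ≤ L := nonneg_of_mul_nonneg_left ((norm_nonneg _).trans (hv' a ha))
    (norm_pos_iff.2 (hv₀ a ha))
  have h := arccos_le_arccos_add_mul_of_abs_deriv_le (p := fun τ ↦ ⟪u τ, u a⟫)
    (p' := fun τ ↦ ⟪u' τ, u a⟫) hab hL
    (fun τ hτ ↦ by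
      simpa using ((hv τ hτ).normalize (hv₀ τ hτ)).inner ℝ (hasDerivWithinAt_const τ _ (u a)))
    (fun τ hτ ↦ by simpa [hu₁ τ hτ, hu₁ a ha] using abs_real_inner_le_norm (u τ) (u a))
    (fun τ hτ ↦ by
      have h := abs_inner_le_norm_mul_norm_mul_sin_angle (w := u a) (horth τ hτ)
      rw [hangle τ hτ, sin_arccos, hu₁ a ha, mul_one] at h
      exact h.trans (mul_le_mul_of_nonneg_right (hu' τ hτ) (Real.sqrt_nonneg _)))
  have hvu : angle (v a) (v b) = angle (u b) (u a) := by simp [u, angle_comm]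
  simpa [hvu, hangle b ⟨hab, le_rfl⟩, real_inner_self_eq_norm_sq, hu₁ a ha] using h

theorem angle_apply_le_mul_of_hasDerivAt {f : E → E} {x : ℝ → E} {U : Set E} {L a b : ℝ}
    (hab : a ≤ b) (hL : 0 ≤ L) (hU : IsOpen U) (hf : DifferentiableOn ℝ f U)
    (hlip : ∀ y₁ ∈ U, ∀ y₂ ∈ U, ‖f y₁ - f y₂‖ ≤ L * ‖y₁ - y₂‖)
    (hx : ∀ τ ∈ Icc a b, HasDerivAt x (f (x τ)) τ) (hxU : ∀ τ ∈ Icc a b, x τ ∈ U)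
    (hf₀ : ∀ τ ∈ Icc a b, f (x τ) ≠ 0) :
    angle (f (x a)) (f (x b)) ≤ L * (b - a) := by
  have hdf : ∀ τ ∈ Icc a b, HasFDerivAt f (fderiv ℝ f (x τ)) (x τ) := fun τ hτ ↦
    (hf.differentiableAt (hU.mem_nhds (hxU τ hτ))).hasFDerivAt
  have hnorm : ∀ τ ∈ Icc a b, ‖fderiv ℝ f (x τ)‖ ≤ L := fun τ hτ ↦ by
    refine (hdf τ hτ).le_of_lip' hL ?_
    filter_upwards [hU.mem_nhds (hxU τ hτ)] with y hy using hlip y hy _ (hxU τ hτ)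
  refine angle_le_mul_of_norm_deriv_le_mul_norm (v := fun t ↦ f (x t)) hab
    (fun τ hτ ↦ ((hdf τ hτ).comp_hasDerivAt τ (hx τ hτ)).hasDerivWithinAt) hf₀ fun τ hτ ↦ ?_
  exact (fderiv ℝ f (x τ)).le_of_opNorm_le (hnorm τ hτ) _

theorem angle_apply_le_div_mul_integral_norm {f : E → E} {x : ℝ → E} {U : Set E} {L₀ L₁ a b : ℝ}
    (hab : a ≤ b) (hL₀ : 0 < L₀) (hL₁ : 0 ≤ L₁) (hU : IsOpen U) (hf : DifferentiableOn ℝ f U)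
    (hlip : ∀ y₁ ∈ U, ∀ y₂ ∈ U, ‖f y₁ - f y₂‖ ≤ L₁ * ‖y₁ - y₂‖)
    (hx : ∀ τ ∈ Icc a b, HasDerivAt x (f (x τ)) τ) (hxU : ∀ τ ∈ Icc a b, x τ ∈ U)
    (hspeed : ∀ τ ∈ Icc a b, L₀ ≤ ‖f (x τ)‖) :
    angle (f (x a)) (f (x b)) ≤ L₁ / L₀ * ∫ τ in a..b, ‖f (x τ)‖ := by
  have hcont : ContinuousOn (fun τ ↦ ‖f (x τ)‖) (uIcc a b) := by
    rw [uIcc_of_le hab]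
    exact (hf.continuousOn.comp (fun τ hτ ↦ (hx τ hτ).continuousAt.continuousWithinAt) hxU).norm
  have hlength : L₀ * (b - a) ≤ ∫ τ in a..b, ‖f (x τ)‖ := by
    simpa [mul_comm] using integral_mono_on hab (intervalIntegrable_const (μ := volume))
      hcont.intervalIntegrable hspeed
  calc angle (f (x a)) (f (x b)) ≤ L₁ * (b - a) :=
        angle_apply_le_mul_of_hasDerivAt hab hL₁ hU hf hlip hx hxU fun τ hτ ↦
          norm_pos_iff.1 (hL₀.trans_le (hspeed τ hτ))
    _ = L₁ / L₀ * (L₀ * (b - a)) := by field_simp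
    _ ≤ L₁ / L₀ * ∫ τ in a..b, ‖f (x τ)‖ := by gcongr

theorem sin_sub_sin_le_inner_sub {x F : ℝ → E} {S : ℝ → ℝ} {w : E} {κ a b : ℝ} (hκ : 0 ≤ κ)
    (hab : a ≤ b) (hx : ∀ τ ∈ Icc a b, HasDerivAt x (F τ) τ)
    (hS : ∀ τ ∈ Icc a b, HasDerivAt S ‖F τ‖ τ)
    (hcos : ∀ τ ∈ Icc a b, ‖F τ‖ * ‖w‖ * cos (κ * S τ) ≤ ⟪F τ, w⟫) :
    ‖w‖ * (sin (κ * S b) - sin (κ * S a)) ≤ κ * ⟪x b - x a, w⟫ := by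
  set g : ℝ → ℝ := fun τ ↦ κ * ⟪x τ, w⟫ - ‖w‖ * sin (κ * S τ)
  have hg : ∀ τ ∈ Icc a b,
      HasDerivAt g (κ * (⟪F τ, w⟫ - ‖F τ‖ * ‖w‖ * cos (κ * S τ))) τ := fun τ hτ ↦ by
    have hsin := ((hS τ hτ).const_mul κ).sin.const_mul ‖w‖
    have hin : HasDerivAt (fun t ↦ ⟪x t, w⟫) ⟪F τ, w⟫ τ := by
      simpa using (hx τ hτ).inner ℝ (hasDerivAt_const τ w)
    exact ((hin.const_mul κ).sub hsin).congr_deriv (by ring)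
  have hmono : MonotoneOn g (Icc a b) :=
    monotoneOn_of_hasDerivWithinAt_nonneg (convex_Icc a b)
      (fun τ hτ ↦ (hg τ hτ).continuousAt.continuousWithinAt)
      (fun τ hτ ↦ (hg τ (interior_subset hτ)).hasDerivWithinAt)
      fun τ hτ ↦ mul_nonneg hκ (sub_nonneg.2 (hcos τ (interior_subset hτ)))
  have h := hmono ⟨le_rfl, hab⟩ ⟨hab, le_rfl⟩ hab
  simp only [g, inner_sub_left] at h ⊢
  linarith

theorem mul_sin_lt_sin_of_lt_pi_sub_arcsin {r θ Θ : ℝ} (hr₀ : 0 ≤ r) (hr₁ : r < 1)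
    (hΘ₀ : 0 < Θ) (hΘ : Θ < π - arcsin r) (hθ₀ : 0 ≤ θ) (hθ : θ ≤ Θ) : r * sin θ < sin Θ := by
  rcases le_or_gt Θ (π / 2) with h | h
  · have hsin : 0 < sin Θ := sin_pos_of_pos_of_lt_pi hΘ₀ (by linarith [pi_pos])
    calc r * sin θ ≤ r * sin Θ := mul_le_mul_of_nonneg_left
          (sin_le_sin_of_le_of_le_pi_div_two (by linarith [pi_pos]) h hθ) hr₀
      _ < sin Θ := by nlinarith
  · calc r * sin θ ≤ r := mul_le_of_le_one_right hr₀ (sin_le_one θ)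
      _ = sin (arcsin r) := (sin_arcsin (by linarith) hr₁.le).symm
      _ < sin (π - Θ) := sin_lt_sin_of_lt_of_le_pi_div_two
          (by linarith [arcsin_nonneg.2 hr₀, pi_pos]) (by linarith) (by linarith)
      _ = sin Θ := sin_pi_sub Θ

theorem false_of_mem_normal_disks {x F : ℝ → E} {κ γ a b : ℝ} {y : E}
    (hx : ∀ τ ∈ Icc a b, HasDerivAt x (F τ) τ) (hF : Continuous F) (hab : a < b)
    (hF₀ : ∀ τ ∈ Icc a b, F τ ≠ 0) (hκ : 0 < κ) (hγ : 0 ≤ γ) (hκγ : κ * γ < 1)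
    (hturn : ∀ τ ∈ Icc a b, ∀ τ' ∈ Icc a b, τ ≤ τ' →
      angle (F τ) (F τ') ≤ κ * ∫ σ in τ..τ', ‖F σ‖)
    (hlen : κ * ∫ σ in a..b, ‖F σ‖ < 2 * (π - arcsin (κ * γ)))
    (hya : ‖y - x a‖ ≤ γ) (hya' : ⟪y - x a, F a⟫ = 0)
    (hyb : ‖y - x b‖ ≤ γ) (hyb' : ⟪y - x b, F b⟫ = 0) : False := by
  have hFi : ∀ c d, IntervalIntegrable (fun σ ↦ ‖F σ‖) volume c d :=
    fun c d ↦ hF.norm.intervalIntegrable c d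
  set S : ℝ → ℝ := fun τ ↦ ∫ σ in a..τ, ‖F σ‖
  have hS : ∀ τ, HasDerivAt S ‖F τ‖ τ := fun τ ↦ (hF.norm.integral_hasStrictDerivAt a τ).hasDerivAt
  have hSsub : ∀ τ τ', ∫ σ in τ..τ', ‖F σ‖ = S τ' - S τ := fun τ τ' ↦
    (integral_interval_sub_left (hFi a τ') (hFi a τ)).symm
  have hSa : S a = 0 := integral_same
  rw [show ∫ σ in a..b, ‖F σ‖ = S b from rfl] at hlen
  set ℓ := S b
  have hℓ : 0 < ℓ := intervalIntegral_pos_of_pos_on (hFi a b)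
    (fun τ hτ ↦ norm_pos_iff.2 (hF₀ τ (Ioo_subset_Icc_self hτ))) hab
  have hS_mem : ∀ τ ∈ Icc a b, S τ ∈ Icc 0 ℓ := fun τ hτ ↦ by
    have h₁ := integral_nonneg (μ := volume) hτ.1 fun σ _ ↦ norm_nonneg (F σ)
    have h₂ := integral_nonneg (μ := volume) hτ.2 fun σ _ ↦ norm_nonneg (F σ)
    rw [hSsub] at h₁ h₂
    constructor <;> linarith
  obtain ⟨m, hm, hSm⟩ : ∃ m ∈ Icc a b, S m = ℓ / 2 := intermediate_value_Icc hab.le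
    (fun τ _ ↦ (hS τ).continuousAt.continuousWithinAt) ⟨by linarith, by linarith⟩
  set Θ := κ * (ℓ / 2) with hΘ_def
  have hangle : ∀ τ ∈ Icc a b, angle (F τ) (F m) ≤ κ * |S τ - ℓ / 2| := by
    intro τ hτ
    rcases le_total τ m with h | h
    · have h' := hturn τ hτ m hm h
      rw [hSsub, hSm] at h'
      exact h'.trans (mul_le_mul_of_nonneg_left (by rw [abs_sub_comm]; exact le_abs_self _) hκ.le)
    · have h' := hturn m hm τ hτ h
      rw [hSsub, hSm, angle_comm] at h'
      exact h'.trans (mul_le_mul_of_nonneg_left (le_abs_self _) hκ.le)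
  have hangleΘ : ∀ τ ∈ Icc a b, κ * |S τ - ℓ / 2| ≤ Θ := fun τ hτ ↦
    mul_le_mul_of_nonneg_left
      (abs_le.2 ⟨by linarith [(hS_mem τ hτ).1], by linarith [(hS_mem τ hτ).2]⟩) hκ.le
  have hΘ₀ : 0 < Θ := by positivity
  have hΘ : Θ < π - arcsin (κ * γ) := by linarith
  have hΘπ : Θ ≤ π := hΘ.le.trans (by linarith [arcsin_nonneg.2 (by positivity : 0 ≤ κ * γ)])
  have hchord : ‖F m‖ * (2 * sin Θ) ≤ κ * ⟪x b - x a, F m⟫ := by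
    have h := sin_sub_sin_le_inner_sub (S := fun τ ↦ S τ - ℓ / 2) (w := F m) hκ.le hab.le
      hx (fun τ _ ↦ (hS τ).sub_const _) fun τ hτ ↦ by
        rw [← cos_angle_mul_norm_mul_norm, ← cos_abs, abs_mul, abs_of_pos hκ]
        have := cos_le_cos_of_nonneg_of_le_pi (angle_nonneg _ _) ((hangleΘ τ hτ).trans hΘπ)
          (hangle τ hτ)
        nlinarith [mul_nonneg (norm_nonneg (F τ)) (norm_nonneg (F m))]
    convert h using 2
    rw [hSa, show ℓ - ℓ / 2 = ℓ / 2 by ring, show (0 : ℝ) - ℓ / 2 = -(ℓ / 2) by ring, mul_neg,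
      sin_neg]
    ring
  have hend : ∀ τ ∈ Icc a b, ‖y - x τ‖ ≤ γ → ⟪y - x τ, F τ⟫ = 0 →
      κ * |⟪y - x τ, F m⟫| < ‖F m‖ * sin Θ := by
    intro τ hτ hy hy'
    have hsin := mul_sin_lt_sin_of_lt_pi_sub_arcsin (by positivity) hκγ hΘ₀ hΘ (angle_nonneg _ _)
      ((hangle τ hτ).trans (hangleΘ τ hτ))
    calc κ * |⟪y - x τ, F m⟫| ≤ κ * (γ * ‖F m‖ * sin (angle (F τ) (F m))) := by
          gcongr
          exact (abs_inner_le_norm_mul_norm_mul_sin_angle hy').trans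
            (by gcongr; exact sin_angle_nonneg _ _)
      _ = ‖F m‖ * (κ * γ * sin (angle (F τ) (F m))) := by ring
      _ < ‖F m‖ * sin Θ := mul_lt_mul_of_pos_left hsin (norm_pos_iff.2 (hF₀ m hm))
  have hsplit : κ * ⟪x b - x a, F m⟫ ≤ κ * |⟪y - x a, F m⟫| + κ * |⟪y - x b, F m⟫| := by
    rw [show x b - x a = (y - x a) - (y - x b) by abel, inner_sub_left, ← mul_add]
    exact mul_le_mul_of_nonneg_left
      (by linarith [le_abs_self ⟪y - x a, F m⟫, neg_abs_le ⟪y - x b, F m⟫]) hκ.le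
  linarith [hend a ⟨le_rfl, hab.le⟩ hya hya', hend b ⟨hab.le, le_rfl⟩ hyb hyb']

end

theorem stmt_9_general {n : ℕ}
    (f : EuclideanSpace ℝ (Fin n) → EuclideanSpace ℝ (Fin n))
    (x : ℝ → EuclideanSpace ℝ (Fin n))
    (s t γ L₀ L₁ : ℝ)
    (hf_C1 : ContDiff ℝ 1 f)
    (hsol : ∀ τ, HasDerivAt x (f (x τ)) τ)
    (hL₀_pos : 0 < L₀) (hL₁_pos : 0 < L₁)
    (hL₀ : ∀ τ ∈ Set.Icc s t, L₀ ≤ ‖f (x τ)‖)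
    (hL₁ : ∃ U : Set (EuclideanSpace ℝ (Fin n)), IsOpen U ∧
      (∀ τ ∈ Set.Icc s t, x τ ∈ U) ∧
      ∀ y₁ ∈ U, ∀ y₂ ∈ U, ‖f y₁ - f y₂‖ ≤ L₁ * ‖y₁ - y₂‖)
    (hγ : 0 < γ) (hγL : γ < L₀ / L₁)
    (hlen : (∫ τ in s..t, ‖f (x τ)‖) <
      (2 * L₀ / L₁) * (Real.pi - Real.arcsin (L₁ * γ / L₀))) :
    ∀ τ₁ ∈ Set.Ioo s t, ∀ τ₂ ∈ Set.Ioo s t, τ₁ ≠ τ₂ →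
      normalDisk f γ (x τ₁) ∩ normalDisk f γ (x τ₂) = ∅ := by
  obtain ⟨U, hU, hxU, hfU⟩ := hL₁
  have hF : Continuous fun τ ↦ f (x τ) :=
    hf_C1.continuous.comp (continuous_iff_continuousAt.2 fun τ ↦ (hsol τ).continuousAt)
  intro τ₁ h₁ τ₂ h₂ hne
  wlog hlt : τ₁ < τ₂ generalizing τ₁ τ₂
  · rw [inter_comm]
    exact this τ₂ h₂ τ₁ h₁ hne.symm (hne.lt_or_gt.resolve_left hlt)
  have hsub : Icc τ₁ τ₂ ⊆ Icc s t := Icc_subset_Icc h₁.1.le h₂.2.le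
  have hκγ : L₁ / L₀ * γ = L₁ * γ / L₀ := by ring
  refine eq_empty_of_forall_notMem fun y ⟨⟨hy₁, hy₁'⟩, hy₂, hy₂'⟩ ↦
    false_of_mem_normal_disks (fun τ _ ↦ hsol τ) hF hlt
      (fun τ hτ ↦ norm_pos_iff.1 (hL₀_pos.trans_le (hL₀ τ (hsub hτ)))) (by positivity) hγ.le ?_
      (fun τ hτ τ' hτ' h ↦ angle_apply_le_div_mul_integral_norm h hL₀_pos hL₁_pos.le hU
        (hf_C1.differentiable one_ne_zero).differentiableOn hfU (fun σ _ ↦ hsol σ)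
        (fun σ hσ ↦ hxU σ (hsub (Icc_subset_Icc hτ.1 hτ'.2 hσ)))
        fun σ hσ ↦ hL₀ σ (hsub (Icc_subset_Icc hτ.1 hτ'.2 hσ)))
      ?_ hy₁ hy₁' hy₂ hy₂'
  · rwa [hκγ, div_lt_one hL₀_pos, ← lt_div_iff₀' hL₁_pos]
  · have hI : ∫ σ in τ₁..τ₂, ‖f (x σ)‖ ≤ ∫ σ in s..t, ‖f (x σ)‖ :=
      integral_mono_interval h₁.1.le hlt.le h₂.2.le
        (Eventually.of_forall fun _ ↦ norm_nonneg _) (hF.norm.intervalIntegrable _ _)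
    calc L₁ / L₀ * ∫ σ in τ₁..τ₂, ‖f (x σ)‖ ≤ L₁ / L₀ * ∫ σ in s..t, ‖f (x σ)‖ := by gcongr
      _ < L₁ / L₀ * (2 * L₀ / L₁ * (π - arcsin (L₁ * γ / L₀))) := by gcongr
      _ = 2 * (π - arcsin (L₁ / L₀ * γ)) := by rw [hκγ]; field_simp

/-- Corollary 2 (Corollary `prop:sof`): if `0 < γ < L₀/L₁` and the arc length
satisfies `∫ₛᵗ ‖f(x τ)‖ dτ < (2 L₀ / L₁)(π - arcsin (L₁ γ / L₀))`, then the tube of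
radius `γ` around the solution is non-self-overlapping over `(s,t)`. -/
theorem stmt_9 {n : ℕ}
    (f : EuclideanSpace ℝ (Fin n) → EuclideanSpace ℝ (Fin n))
    (x : ℝ → EuclideanSpace ℝ (Fin n))
    (s t γ L₀ L₁ : ℝ)
    (hf_C1 : ContDiff ℝ 1 f)
    (hsol : ∀ τ, HasDerivAt x (f (x τ)) τ)
    (hst : s ≤ t)
    (hL₀_pos : 0 < L₀) (hL₁_pos : 0 < L₁)
    (hL₀ : ∀ τ ∈ Set.Icc s t, L₀ ≤ ‖f (x τ)‖)
    (hL₁ : ∃ U : Set (EuclideanSpace ℝ (Fin n)), IsOpen U ∧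
      (∀ τ ∈ Set.Icc s t, x τ ∈ U) ∧
      ∀ y₁ ∈ U, ∀ y₂ ∈ U, ‖f y₁ - f y₂‖ ≤ L₁ * ‖y₁ - y₂‖)
    (hγ : 0 < γ) (hγL : γ < L₀ / L₁)
    (hlen : (∫ τ in s..t, ‖f (x τ)‖) <
      (2 * L₀ / L₁) * (Real.pi - Real.arcsin (L₁ * γ / L₀))) :
    ∀ τ₁ ∈ Set.Ioo s t, ∀ τ₂ ∈ Set.Ioo s t, τ₁ ≠ τ₂ →
      normalDisk f γ (x τ₁) ∩ normalDisk f γ (x τ₂) = ∅ :=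
  stmt_9_general f x s t γ L₀ L₁ hf_C1 hsol hL₀_pos hL₁_pos hL₀ hL₁ hγ hγL hlen
end

section
/- Let w : [0, T] → ℝ be Lipschitz with constant K > 0, and suppose w(τ) ≤ b for all τ ∈ [0,T] and w(T) ≤ −m, where b > 0 and m > 0. Then ∫₀ᵀ w(τ)dτ ≤ ∫₀ᵀ min{b, Kτ − m}dτ; explicitly, if T ≥ (b+m)/K then ∫₀ᵀ w(τ)dτ ≤ bT − (b+m)²/(2K), and if T < (b+m)/K then ∫₀ᵀ w(τ)dτ ≤ ½KT² − mT. In particular, if additionally T < (b+m)²/(Kb), then ∫₀ᵀ w(τ)dτ < bT/2. (The same bounds hold if instead w(0) ≤ −m, by time reversal.) -/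
/-!
Reading the Lipschitz bound backwards from `T` gives `w τ ≤ w T + K (T - τ) ≤ K (T - τ) - m`, so
together with `w ≤ b` the function `w` lies below the reflected ramp `min b (K (T - τ) - m)`, whose
integral over `[0, T]` is that of `min b (K τ - m)`. The ramp is linear up to `τ = (b + m) / K` and
constant afterwards, which gives the explicit bounds; each of them is below `b T / 2` as soon as
`T < (b + m)² / (K b)`.
-/

open Set intervalIntegral

theorem integral_mul_id_sub_const (K m a c : ℝ) :
    ∫ τ in a..c, (K * τ - m) = K * (c ^ 2 - a ^ 2) / 2 - m * (c - a) := by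
  rw [integral_sub ((by fun_prop : Continuous fun τ : ℝ => K * τ).intervalIntegrable _ _)
      intervalIntegrable_const, integral_const_mul, integral_id, integral_const, smul_eq_mul]
  ring

section Ramp

variable {K b m s T : ℝ}

/-- Split at `s`: the ramp is bounded by its linear part before `s` and by `b` after. -/
theorem integral_min_le_of_mem_Icc (hs : s ∈ Icc 0 T) :
    ∫ τ in 0..T, min b (K * τ - m) ≤ K * s ^ 2 / 2 - m * s + b * (T - s) := by
  have hcont : Continuous fun τ : ℝ => min b (K * τ - m) := by fun_prop
  have hlinear : ∫ τ in 0..s, min b (K * τ - m) ≤ ∫ τ in 0..s, (K * τ - m) :=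
    integral_mono_on hs.1 (hcont.intervalIntegrable _ _)
      ((by fun_prop : Continuous fun τ : ℝ => K * τ - m).intervalIntegrable _ _)
      fun τ _ => min_le_right _ _
  have hconst : ∫ τ in s..T, min b (K * τ - m) ≤ ∫ _ in s..T, b :=
    integral_mono_on hs.2 (hcont.intervalIntegrable _ _) intervalIntegrable_const
      fun τ _ => min_le_left _ _
  rw [← integral_add_adjacent_intervals (hcont.intervalIntegrable 0 s)
    (hcont.intervalIntegrable s T)]
  rw [integral_mul_id_sub_const] at hlinear
  rw [integral_const, smul_eq_mul] at hconst
  linarith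

theorem integral_min_le_of_nonneg (hT : 0 ≤ T) :
    ∫ τ in 0..T, min b (K * τ - m) ≤ K * T ^ 2 / 2 - m * T := by
  simpa using integral_min_le_of_mem_Icc (b := b) (K := K) (m := m) ⟨hT, le_rfl⟩

theorem integral_min_le_of_div_le (hK : 0 < K) (hbm : 0 ≤ b + m) (hT : (b + m) / K ≤ T) :
    ∫ τ in 0..T, min b (K * τ - m) ≤ b * T - (b + m) ^ 2 / (2 * K) := by
  refine (integral_min_le_of_mem_Icc ⟨div_nonneg hbm hK.le, hT⟩).trans_eq ?_
  field_simp
  ring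

end Ramp

theorem integral_le_integral_min_of_abs_sub_le {w : ℝ → ℝ} {T K b m : ℝ} (hT : 0 ≤ T)
    (hLip : ∀ τ₁ ∈ Icc 0 T, ∀ τ₂ ∈ Icc 0 T, |w τ₁ - w τ₂| ≤ K * |τ₁ - τ₂|)
    (hwb : ∀ τ ∈ Icc 0 T, w τ ≤ b) (hwT : w T ≤ -m) :
    ∫ τ in 0..T, w τ ≤ ∫ τ in 0..T, min b (K * τ - m) := by
  have hcont : ContinuousOn w (Icc 0 T) :=
    (LipschitzOnWith.of_dist_le' (by simpa only [Real.dist_eq] using hLip)).continuousOn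
  have hreflected : ∀ τ ∈ Icc 0 T, w τ ≤ min b (K * (T - τ) - m) := by
    intro τ hτ
    have hdist := hLip T (right_mem_Icc.2 hT) τ hτ
    rw [abs_of_nonneg (sub_nonneg.2 hτ.2)] at hdist
    exact le_min (hwb τ hτ) (by linarith [le_abs_self (w T - w τ), neg_abs_le (w T - w τ)])
  calc ∫ τ in 0..T, w τ ≤ ∫ τ in 0..T, min b (K * (T - τ) - m) :=
        integral_mono_on hT (hcont.intervalIntegrable_of_Icc hT)
          ((by fun_prop : Continuous fun τ => min b (K * (T - τ) - m)).intervalIntegrable _ _)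
          hreflected
    _ = ∫ τ in 0..T, min b (K * τ - m) := by
        simpa using integral_comp_sub_left (a := 0) (b := T) (fun τ => min b (K * τ - m)) T

/-- The key integral estimate (Lemma `lem:5`, Cases 2–3): if `w` is `K`-Lipschitz on
`[0,T]`, `w ≤ b` on `[0,T]` and `w(T) ≤ -m` with `b, m > 0`, then
`∫₀ᵀ w ≤ ∫₀ᵀ min{b, Kτ - m} dτ`; explicitly, `∫₀ᵀ w ≤ bT - (b+m)²/(2K)` when
`T ≥ (b+m)/K`, and `∫₀ᵀ w ≤ ½KT² - mT` when `T < (b+m)/K`. In particular, if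
moreover `0 < T < (b+m)²/(Kb)`, then `∫₀ᵀ w < bT/2`. -/
theorem stmt_12 (w : ℝ → ℝ) (T K b m : ℝ)
    (hT : 0 ≤ T) (hK : 0 < K) (hb : 0 < b) (hm : 0 < m)
    (hLip : ∀ τ₁ ∈ Set.Icc 0 T, ∀ τ₂ ∈ Set.Icc 0 T, |w τ₁ - w τ₂| ≤ K * |τ₁ - τ₂|)
    (hwb : ∀ τ ∈ Set.Icc 0 T, w τ ≤ b)
    (hwT : w T ≤ -m) :
    ((∫ τ in (0:ℝ)..T, w τ) ≤ ∫ τ in (0:ℝ)..T, min b (K * τ - m)) ∧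
    ((b + m) / K ≤ T → (∫ τ in (0:ℝ)..T, w τ) ≤ b * T - (b + m) ^ 2 / (2 * K)) ∧
    (T < (b + m) / K → (∫ τ in (0:ℝ)..T, w τ) ≤ K * T ^ 2 / 2 - m * T) ∧
    (0 < T → T < (b + m) ^ 2 / (K * b) → (∫ τ in (0:ℝ)..T, w τ) < b * T / 2) := by
  have hramp := integral_le_integral_min_of_abs_sub_le hT hLip hwb hwT
  have hlong : (b + m) / K ≤ T → ∫ τ in 0..T, w τ ≤ b * T - (b + m) ^ 2 / (2 * K) :=
    fun h => hramp.trans (integral_min_le_of_div_le hK (by linarith) h)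
  have hshort : ∫ τ in 0..T, w τ ≤ K * T ^ 2 / 2 - m * T :=
    hramp.trans (integral_min_le_of_nonneg hT)
  refine ⟨hramp, hlong, fun _ => hshort, fun hT0 hTsmall => ?_⟩
  rcases lt_or_ge T ((b + m) / K) with hTs | hTs
  · have hKT : K * T < b + m := by rwa [lt_div_iff₀ hK, mul_comm] at hTs
    nlinarith
  · have hhalf : b * T / 2 < (b + m) ^ 2 / (2 * K) := by
      rw [lt_div_iff₀ (by positivity), mul_comm K b] at hTsmall
      rw [div_lt_div_iff₀ two_pos (by positivity)]
      nlinarith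
    linarith [hlong hTs]
end

section
/- Let w : [0, T] → ℝ be Lipschitz with constant K > 0, and suppose w(τ) ≤ b for all τ ∈ [0,T], w(0) ≤ −m, and w(T) ≤ −m, where b > 0 and m > 0. Then ∫₀ᵀ w(τ)dτ ≤ φ(T), where φ(T) := ¼KT² − mT if KT < 2(b+m), and φ(T) := bT − (b+m)²/K if KT ≥ 2(b+m). -/
/-!
The Lipschitz bound and the endpoint values give `w τ ≤ min (b, K τ - m, K (T - τ) - m)` on
`[0, T]`. If `K T < 2 (b + m)` the two ramps meet below `b` at `T / 2`, and the tent under them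
has area `K T² / 4 - m T`. Otherwise they reach `b` at `t = (b + m) / K` and at `T - t`, and the
truncated tent has area `b T - (b + m) t = b T - (b + m)² / K`.
-/

open Set intervalIntegral

section RampBounds

variable {w : ℝ → ℝ} {a c v K : ℝ}

theorem integral_le_of_le_ramp_up (hac : a ≤ c) (hw : ContinuousOn w (Icc a c))
    (h : ∀ τ ∈ Icc a c, w τ ≤ v + K * (τ - a)) :
    ∫ τ in a..c, w τ ≤ v * (c - a) + K * (c - a) ^ 2 / 2 := by
  calc ∫ τ in a..c, w τ ≤ ∫ τ in a..c, (v + K * (τ - a)) :=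
        integral_mono_on hac (hw.intervalIntegrable_of_Icc hac)
          ((by fun_prop : Continuous _).intervalIntegrable _ _) h
    _ = v * (c - a) + K * (c - a) ^ 2 / 2 := by
      rw [integral_add intervalIntegrable_const
          ((by fun_prop : Continuous _).intervalIntegrable _ _),
        integral_const, integral_const_mul, integral_comp_sub_right (fun x => x), integral_id]
      simp only [sub_self, smul_eq_mul]
      ring

theorem integral_le_of_le_ramp_down (hac : a ≤ c) (hw : ContinuousOn w (Icc a c))
    (h : ∀ τ ∈ Icc a c, w τ ≤ v + K * (c - τ)) :
    ∫ τ in a..c, w τ ≤ v * (c - a) + K * (c - a) ^ 2 / 2 := by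
  calc ∫ τ in a..c, w τ ≤ ∫ τ in a..c, (v + K * (c - τ)) :=
        integral_mono_on hac (hw.intervalIntegrable_of_Icc hac)
          ((by fun_prop : Continuous _).intervalIntegrable _ _) h
    _ = v * (c - a) + K * (c - a) ^ 2 / 2 := by
      rw [integral_add intervalIntegrable_const
          ((by fun_prop : Continuous _).intervalIntegrable _ _),
        integral_const, integral_const_mul, integral_comp_sub_left (fun x => x), integral_id]
      simp only [sub_self, smul_eq_mul]
      ring

theorem integral_le_of_le_const (hac : a ≤ c) (hw : ContinuousOn w (Icc a c))
    (h : ∀ τ ∈ Icc a c, w τ ≤ v) :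
    ∫ τ in a..c, w τ ≤ v * (c - a) := by
  simpa using integral_le_of_le_ramp_up (K := 0) hac hw (by simpa using h)

end RampBounds

section TentBounds

variable {w : ℝ → ℝ} {T K b m : ℝ}

theorem integral_le_of_le_tent (hT : 0 ≤ T) (hw : ContinuousOn w (Icc 0 T))
    (hup : ∀ τ ∈ Icc 0 T, w τ ≤ -m + K * τ) (hdown : ∀ τ ∈ Icc 0 T, w τ ≤ -m + K * (T - τ)) :
    ∫ τ in 0..T, w τ ≤ K * T ^ 2 / 4 - m * T := by
  have hcont {a c : ℝ} (ha : 0 ≤ a) (hc : c ≤ T) : ContinuousOn w (Icc a c) :=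
    hw.mono (Icc_subset_Icc ha hc)
  have hleft := integral_le_of_le_ramp_up (c := T / 2) (by linarith)
    (hcont le_rfl (by linarith))
    fun τ hτ ↦ by rw [sub_zero]; exact hup τ ⟨hτ.1, by linarith [hτ.2]⟩
  have hright := integral_le_of_le_ramp_down (a := T / 2) (by linarith)
    (hcont (by linarith) le_rfl) fun τ hτ ↦ hdown τ ⟨by linarith [hτ.1], hτ.2⟩
  rw [← integral_add_adjacent_intervals (b := T / 2)
    ((hcont le_rfl (by linarith)).intervalIntegrable_of_Icc (by linarith))
    ((hcont (by linarith) le_rfl).intervalIntegrable_of_Icc (by linarith))]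
  linarith

theorem integral_le_of_le_truncated_tent (hK : 0 < K) (hbm : 0 ≤ b + m)
    (hKT : 2 * (b + m) ≤ K * T) (hw : ContinuousOn w (Icc 0 T))
    (hup : ∀ τ ∈ Icc 0 T, w τ ≤ -m + K * τ) (hdown : ∀ τ ∈ Icc 0 T, w τ ≤ -m + K * (T - τ))
    (hwb : ∀ τ ∈ Icc 0 T, w τ ≤ b) :
    ∫ τ in 0..T, w τ ≤ b * T - (b + m) ^ 2 / K := by
  set t := (b + m) / K with ht_def
  have hKt : K * t = b + m := mul_div_cancel₀ _ hK.ne'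
  have ht : 0 ≤ t := div_nonneg hbm hK.le
  have h2t : 2 * t ≤ T := le_of_mul_le_mul_left (by linarith) hK
  have hcont {a c : ℝ} (ha : 0 ≤ a) (hc : c ≤ T) : ContinuousOn w (Icc a c) :=
    hw.mono (Icc_subset_Icc ha hc)
  have hleft := integral_le_of_le_ramp_up (c := t) ht (hcont le_rfl (by linarith))
    fun τ hτ ↦ by rw [sub_zero]; exact hup τ ⟨hτ.1, by linarith [hτ.2]⟩
  have hmid := integral_le_of_le_const (a := t) (c := T - t) (by linarith)
    (hcont ht (by linarith)) fun τ hτ ↦ hwb τ ⟨by linarith [hτ.1], by linarith [hτ.2]⟩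
  have hright := integral_le_of_le_ramp_down (a := T - t) (by linarith)
    (hcont (by linarith) le_rfl) fun τ hτ ↦ hdown τ ⟨by linarith [hτ.1], hτ.2⟩
  have hint {a c : ℝ} (ha : 0 ≤ a) (hac : a ≤ c) (hc : c ≤ T) :
      IntervalIntegrable w MeasureTheory.volume a c :=
    (hcont ha hc).intervalIntegrable_of_Icc hac
  rw [← integral_add_adjacent_intervals (b := T - t) (hint le_rfl (by linarith) (by linarith))
      (hint (by linarith) (by linarith) le_rfl),
    ← integral_add_adjacent_intervals (b := t) (hint le_rfl ht (by linarith))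
      (hint ht (by linarith) (by linarith))]
  have hsq : (b + m) ^ 2 / K = (b + m) * t := by rw [ht_def]; ring
  have hKtt : K * t ^ 2 = (b + m) * t := by rw [← hKt]; ring
  linarith

end TentBounds

/-- The key integral estimate (Lemma `lem:5`, Case 4): if `w` is `K`-Lipschitz on
`[0,T]`, `w ≤ b` on `[0,T]`, and `w(0) ≤ -m`, `w(T) ≤ -m` with `b, m > 0`, then
`∫₀ᵀ w ≤ φ(T)` where `φ(T) = ¼KT² - mT` if `KT < 2(b+m)` and
`φ(T) = bT - (b+m)²/K` otherwise. -/
theorem stmt_13 (w : ℝ → ℝ) (T K b m : ℝ)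
    (hT : 0 ≤ T) (hK : 0 < K) (hb : 0 < b) (hm : 0 < m)
    (hLip : ∀ τ₁ ∈ Set.Icc 0 T, ∀ τ₂ ∈ Set.Icc 0 T, |w τ₁ - w τ₂| ≤ K * |τ₁ - τ₂|)
    (hwb : ∀ τ ∈ Set.Icc 0 T, w τ ≤ b)
    (hw0 : w 0 ≤ -m) (hwT : w T ≤ -m) :
    (∫ τ in (0:ℝ)..T, w τ) ≤
      if K * T < 2 * (b + m) then K * T ^ 2 / 4 - m * T
      else b * T - (b + m) ^ 2 / K := by
  have hcont : ContinuousOn w (Icc 0 T) :=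
    (LipschitzOnWith.of_dist_le_mul (K := K.toNNReal) fun x hx y hy ↦ by
      simpa [Real.dist_eq, Real.coe_toNNReal _ hK.le] using hLip x hx y hy).continuousOn
  have hup (τ : ℝ) (hτ : τ ∈ Icc 0 T) : w τ ≤ -m + K * τ := by
    have := (le_abs_self _).trans (hLip τ hτ 0 ⟨le_rfl, hT⟩)
    rw [sub_zero, abs_of_nonneg hτ.1] at this
    linarith
  have hdown (τ : ℝ) (hτ : τ ∈ Icc 0 T) : w τ ≤ -m + K * (T - τ) := by
    have := (le_abs_self _).trans (hLip τ hτ T ⟨hT, le_rfl⟩)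
    rw [abs_sub_comm, abs_of_nonneg (sub_nonneg.2 hτ.2)] at this
    linarith
  split_ifs with hKT
  · exact integral_le_of_le_tent hT hcont hup hdown
  · exact integral_le_of_le_truncated_tent hK (by linarith) (not_lt.1 hKT) hcont hup hdown hwb
end
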